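/- Let R = K[x_1,...,x_n] over a field K of characteristic p > 0, with a lexicographic monomial order <, and let g ∈ R with leading monomial in_<(g) = x_1 x_2 ··· x_n (the product of all variables, with leading coefficient 1). Then Tr(g^{p−1}) = 1, where Tr is the trace map; consequently φ(h) := Tr(g^{p−1} h) defines a Frobenius splitting of R. -/

import Mathlib

open MvPolynomial

-- The trace map on `K[x_1,…,x_n]` for a perfect field `K` of characteristic `p`.
open Classical in
noncomputable def trMap (p : ℕ) (K : Type*) [Field K] [ExpChar K p] [PerfectRing K p]
    {n : ℕ} (f : MvPolynomial (Fin n) K) : MvPolynomial (Fin n) K :=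
  ∑ m ∈ f.support,
    if ∀ i, p ∣ (m i + 1) then
      MvPolynomial.monomial
        (Finsupp.mapRange (fun e => (e + 1) / p - 1)
          (Nat.sub_eq_zero_of_le (Nat.div_le_self 1 p)) m)
        ((frobeniusEquiv K p).symm (MvPolynomial.coeff m f))
    else 0

/-- The lexicographic order on monomials induced by a strict ordering `vord` of the
variables (`vord w v` meaning `w` is more significant than `v`): `m ≤ m'` iff
`m = m'` or, at the most significant variable where they differ, `m` has the
smaller exponent. -/
def lexLEVar {n : ℕ} (vord : Fin n → Fin n → Prop) (m m' : Fin n →₀ ℕ) : Prop :=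
  m = m' ∨ ∃ v, m v < m' v ∧ ∀ w, vord w v → m w = m' w

/-- `m` is the leading monomial of `f` with respect to `le`. -/
def IsLeadMono {K : Type*} [Field K] {n : ℕ}
    (le : (Fin n →₀ ℕ) → (Fin n →₀ ℕ) → Prop)
    (f : MvPolynomial (Fin n) K) (m : Fin n →₀ ℕ) : Prop :=
  m ∈ f.support ∧ ∀ m' ∈ f.support, le m' m

/-!
The coefficient of `Tr f` at `m` is the `p`-th root of the coefficient of `f` at
`p • m + (p - 1) • 𝟙`. For any monomial order, `g ^ (p - 1)` is monic with leading exponent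
`(p - 1) • 𝟙`, while every exponent `p • m + (p - 1) • 𝟙` with `m ≠ 0` lies strictly above it;
hence `Tr (g ^ (p - 1))` only sees the leading coefficient `1`. The splitting properties come
from `Tr` being additive with `Tr (a ^ p * f) = a * Tr f`.
-/

theorem Nat.dvd_add_one_and_div_sub_one_eq_iff {p e k : ℕ} (hp : 0 < p) :
    (p ∣ e + 1 ∧ (e + 1) / p - 1 = k) ↔ e = p * k + (p - 1) := by
  constructor
  · rintro ⟨⟨q, hq⟩, rfl⟩
    rw [hq, Nat.mul_div_cancel_left _ hp]
    rcases q with _ | q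
    · omega
    · rw [mul_add] at hq
      rw [Nat.add_sub_cancel]
      omega
  · rintro rfl
    have h : p * k + (p - 1) + 1 = p * (k + 1) := by rw [mul_add]; omega
    rw [h, Nat.mul_div_cancel_left _ hp]
    exact ⟨dvd_mul_right _ _, rfl⟩

noncomputable def allOnes (n : ℕ) : Fin n →₀ ℕ := Finsupp.equivFunOnFinite.symm fun _ => 1

@[simp] lemma allOnes_apply {n : ℕ} (i : Fin n) : allOnes n i = 1 := rfl

section Trace

variable {p : ℕ} {K : Type*} [Field K] [ExpChar K p] [PerfectRing K p] {n : ℕ}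

theorem coeff_trMap (f : MvPolynomial (Fin n) K) (m : Fin n →₀ ℕ) :
    coeff m (trMap p K f) =
      (frobeniusEquiv K p).symm (coeff (p • m + (p - 1) • allOnes n) f) := by
  classical
  have hp := expChar_pos K p
  have key : ∀ e : Fin n →₀ ℕ, ((∀ i, p ∣ e i + 1) ∧
      Finsupp.mapRange (fun e => (e + 1) / p - 1)
        (Nat.sub_eq_zero_of_le (Nat.div_le_self 1 p)) e = m) ↔
      e = p • m + (p - 1) • allOnes n := by
    intro e
    simp only [Finsupp.ext_iff, Finsupp.mapRange_apply, ← forall_and,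
      Nat.dvd_add_one_and_div_sub_one_eq_iff hp]
    simp [mul_comm]
  unfold trMap
  simp only [coeff_sum, apply_ite (coeff m), coeff_monomial, coeff_zero, ← ite_and, key]
  rw [Finset.sum_ite_eq']
  split_ifs with h
  · rfl
  · rw [notMem_support_iff.mp h, map_zero]

theorem trMap_add (f g : MvPolynomial (Fin n) K) :
    trMap p K (f + g) = trMap p K f + trMap p K g := by
  ext m
  simp only [coeff_add, coeff_trMap, map_add]

theorem trMap_monomial_pow_mul (s : Fin n →₀ ℕ) (c : K) (f : MvPolynomial (Fin n) K) :
    trMap p K (monomial s c ^ p * f) = monomial s c * trMap p K f := by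
  have hp := expChar_pos K p
  ext m
  rw [coeff_trMap, monomial_pow]
  by_cases hs : s ≤ m
  · obtain ⟨t, rfl⟩ := exists_add_of_le hs
    rw [coeff_monomial_mul, coeff_trMap, smul_add, add_assoc, coeff_monomial_mul, map_mul,
      ← frobenius_def, ← coe_frobeniusEquiv, RingEquiv.symm_apply_apply]
  · have hps : ¬ p • s ≤ p • m + (p - 1) • allOnes n := by
      intro h
      refine hs fun i => ?_
      have hi := h i
      simp only [Finsupp.smul_apply, Finsupp.add_apply, smul_eq_mul, allOnes_apply, mul_one] at hi
      by_contra! hlt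
      have := Nat.mul_le_mul_left p (Nat.succ_le_of_lt hlt)
      rw [Nat.mul_succ] at this
      omega
    rw [coeff_monomial_mul', coeff_monomial_mul', if_neg hps, if_neg hs, map_zero]

theorem trMap_pow_mul (a f : MvPolynomial (Fin n) K) :
    trMap p K (a ^ p * f) = a * trMap p K f := by
  induction a using MvPolynomial.induction_on' with
  | monomial s c => exact trMap_monomial_pow_mul s c f
  | add a b ha hb => rw [add_pow_expChar, add_mul, trMap_add, ha, hb, add_mul]

open scoped MonomialOrder in
theorem trMap_eq_one_of_monic (ord : MonomialOrder (Fin n)) {f : MvPolynomial (Fin n) K}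
    (hf : ord.Monic f) (hdeg : ord.degree f = (p - 1) • allOnes n) : trMap p K f = 1 := by
  have hp := expChar_pos K p
  ext m
  rw [coeff_trMap, coeff_one]
  split_ifs with hm
  · rw [← hm, smul_zero, zero_add, ← hdeg, hf.coeff_degree, map_one]
  · have hlt : ord.degree f ≺[ord] p • m + (p - 1) • allOnes n := by
      rw [hdeg, add_comm, map_add]
      refine lt_add_of_pos_right _ (ord.toSyn_lt_iff_ne_zero.mpr ?_)
      rw [Ne, ord.toSyn_eq_zero_iff, smul_eq_zero]
      exact not_or.mpr ⟨hp.ne', Ne.symm hm⟩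
    rw [ord.coeff_eq_zero_of_lt hlt, map_zero]

end Trace

open scoped MonomialOrder in
theorem IsLeadMono.degree_eq {K : Type*} [Field K] {n : ℕ} (ord : MonomialOrder (Fin n))
    {le : (Fin n →₀ ℕ) → (Fin n →₀ ℕ) → Prop} (hle : ∀ a b, le a b → a ≼[ord] b)
    {f : MvPolynomial (Fin n) K} {m : Fin n →₀ ℕ} (h : IsLeadMono le f m) : ord.degree f = m :=
  ord.toSyn.injective <| le_antisymm (ord.degree_le_iff.mpr fun b hb => hle b m (h.2 b hb))
    (ord.le_degree h.1)

/-- `Fin n` carries its own order instances, so the one coming from `vord` is passed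
explicitly; the most significant variables are the `vord`-least ones, as in `lexLEVar`. -/
noncomputable def lexOrderVar {n : ℕ} (vord : Fin n → Fin n → Prop)
    [IsStrictTotalOrder (Fin n) vord] : MonomialOrder (Fin n) :=
  letI := Classical.decRel vord
  @MonomialOrder.lex (Fin n) (linearOrderOfSTO vord)
    (@Finite.to_wellFoundedGT (Fin n) _ (linearOrderOfSTO vord).toPreorder)

open scoped MonomialOrder in
theorem toSyn_le_of_lexLEVar {n : ℕ} {vord : Fin n → Fin n → Prop}
    [IsStrictTotalOrder (Fin n) vord] {a b : Fin n →₀ ℕ} :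
    lexLEVar vord a b → a ≼[lexOrderVar vord] b := by
  rintro (rfl | ⟨v, hv, hw⟩)
  · exact le_rfl
  · have hlt : Finsupp.Lex vord (· < ·) a b := ⟨v, hw, hv⟩
    exact le_of_lt (show a ≺[lexOrderVar vord] b from hlt)

theorem stmt13_general (p : ℕ) (K : Type*) [Field K]
    [ExpChar K p] [PerfectRing K p] {n : ℕ}
    (vord : Fin n → Fin n → Prop) (hvord : IsStrictTotalOrder (Fin n) vord)
    (g : MvPolynomial (Fin n) K)
    (hlead : IsLeadMono (lexLEVar vord) g
      (Finsupp.equivFunOnFinite.symm fun _ => (1 : ℕ)))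
    (hcoeff : MvPolynomial.coeff (Finsupp.equivFunOnFinite.symm fun _ => (1 : ℕ)) g = 1) :
    trMap p K (g ^ (p - 1)) = 1 ∧
    (∀ a b : MvPolynomial (Fin n) K,
      trMap p K (g ^ (p - 1) * (a + b)) =
        trMap p K (g ^ (p - 1) * a) + trMap p K (g ^ (p - 1) * b)) ∧
    (∀ a b : MvPolynomial (Fin n) K,
      trMap p K (g ^ (p - 1) * (a ^ p * b)) = a * trMap p K (g ^ (p - 1) * b)) ∧
    trMap p K (g ^ (p - 1) * 1) = 1 := by
  have hdeg : (lexOrderVar vord).degree g = allOnes n :=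
    hlead.degree_eq _ fun _ _ => toSyn_le_of_lexLEVar
  have hmonic : (lexOrderVar vord).Monic g := by
    rwa [MonomialOrder.Monic, MonomialOrder.leadingCoeff, hdeg]
  have htr : trMap p K (g ^ (p - 1)) = 1 :=
    trMap_eq_one_of_monic _ hmonic.pow (by rw [MonomialOrder.degree_pow, hdeg])
  refine ⟨htr, fun a b => ?_, fun a b => ?_, by rw [mul_one, htr]⟩
  · rw [mul_add, trMap_add]
  · rw [mul_left_comm, trMap_pow_mul]

/-- Let `g ∈ K[x_1,…,x_n]` (char `p > 0`) have leading monomial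
`x_1⋯x_n` with leading coefficient `1`, with respect to a lexicographic monomial
order.  Then `Tr(g^{p-1}) = 1`, and consequently `φ(h) := Tr(g^{p-1}·h)` is a
Frobenius splitting of `K[x_1,…,x_n]`. -/
theorem stmt13 (p : ℕ) (hp : p.Prime) (K : Type*) [Field K] [CharP K p]
    [ExpChar K p] [PerfectRing K p] {n : ℕ}
    (vord : Fin n → Fin n → Prop) (hvord : IsStrictTotalOrder (Fin n) vord)
    (g : MvPolynomial (Fin n) K)
    (hlead : IsLeadMono (lexLEVar vord) g
      (Finsupp.equivFunOnFinite.symm fun _ => (1 : ℕ)))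
    (hcoeff : MvPolynomial.coeff (Finsupp.equivFunOnFinite.symm fun _ => (1 : ℕ)) g = 1) :
    trMap p K (g ^ (p - 1)) = 1 ∧
    (∀ a b : MvPolynomial (Fin n) K,
      trMap p K (g ^ (p - 1) * (a + b)) =
        trMap p K (g ^ (p - 1) * a) + trMap p K (g ^ (p - 1) * b)) ∧
    (∀ a b : MvPolynomial (Fin n) K,
      trMap p K (g ^ (p - 1) * (a ^ p * b)) = a * trMap p K (g ^ (p - 1) * b)) ∧
    trMap p K (g ^ (p - 1) * 1) = 1 :=
  stmt13_general p K vord hvord g hlead hcoeff
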